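/- The minimal norms of representatives of the 14 nonzero cosets of M in its dual M*, where M has Gram matrix [[3,2,0],[2,3,0],[0,0,3]], are exactly 1/3, 2/5, 3/5, 11/15 and 14/15 (each value attained); in particular every nonzero coset of M in M* contains a vector of norm at most 14/15. -/

import Mathlib

open scoped Matrix

/-- The Gram matrix of `M`. -/
def B19 : Matrix (Fin 3) (Fin 3) ℚ := !![3, 2, 0; 2, 3, 0; 0, 0, 3]

/-- The quadratic form (norm) on `M ⊗ ℚ` in the basis coordinates. -/
def Q19 (x : Fin 3 → ℚ) : ℚ := x ⬝ᵥ (B19 *ᵥ x)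

/-- Membership in the dual `M*`: all inner products with the basis of `M` are integers. -/
def inDual19 (x : Fin 3 → ℚ) : Prop := ∀ i, ∃ k : ℤ, (B19 *ᵥ x) i = (k : ℚ)

/-- Membership in `M` itself: integral coordinates. -/
def isIntVec19 (x : Fin 3 → ℚ) : Prop := ∀ i, ∃ k : ℤ, x i = (k : ℚ)

/-!
A vector of `M*` is determined by its integral inner products `a, b, c` with `v₁, v₂, v₃`,
i.e. it is `B⁻¹ (a, b, c)`. In these coordinates its norm is `(3a² - 4ab + 3b²)/5 + c²/3`,
and its class in `M*/M ≅ ℤ/5 × ℤ/3` is `(a + b mod 5, c mod 3)`. The minimum over a coset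
therefore splits: the binary form takes values `0, 3, 2, 2, 3` at best on `a + b ≡ 0, …, 4`
(a value `≤ 2` forces `|a|, |b| ≤ 1`), and `c²` takes `0, 1, 1` at best on `c ≡ 0, 1, 2`.
-/

lemma exists_intCast_eq_div_iff (n : ℤ) (m : ℕ) [NeZero m] :
    (∃ k : ℤ, (n : ℚ) / m = k) ↔ (m : ℤ) ∣ n := by
  have hm : (m : ℚ) ≠ 0 := NeZero.ne _
  constructor
  · rintro ⟨k, hk⟩
    refine ⟨k, Int.cast_injective (α := ℚ) ?_⟩
    push_cast
    rw [← hk, mul_div_cancel₀ _ hm]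
  · rintro ⟨k, rfl⟩
    exact ⟨k, by push_cast; field_simp⟩

lemma isIntVec19.sub {x y : Fin 3 → ℚ} (hx : isIntVec19 x) (hy : isIntVec19 y) :
    isIntVec19 (x - y) := fun i => by
  obtain ⟨k, hk⟩ := hx i
  obtain ⟨l, hl⟩ := hy i
  exact ⟨k - l, by simp [hk, hl]⟩

/-- The vector of `M*` whose inner products with `v₁, v₂, v₃` are `a, b, c`. -/
def dualVec (a b c : ℤ) : Fin 3 → ℚ :=
  ![((3 * a - 2 * b : ℤ) : ℚ) / 5, ((3 * b - 2 * a : ℤ) : ℚ) / 5, (c : ℚ) / 3]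

lemma B19_mulVec (x : Fin 3 → ℚ) :
    B19 *ᵥ x = ![3 * x 0 + 2 * x 1, 2 * x 0 + 3 * x 1, 3 * x 2] := by
  ext i
  fin_cases i <;> simp [B19, Matrix.mulVec, dotProduct, Fin.sum_univ_three]

lemma inDual19_dualVec (a b c : ℤ) : inDual19 (dualVec a b c) := by
  intro i
  fin_cases i
  · exact ⟨a, by simp [B19_mulVec, dualVec]; ring⟩
  · exact ⟨b, by simp [B19_mulVec, dualVec]; ring⟩
  · exact ⟨c, by simp [B19_mulVec, dualVec]; ring⟩

lemma exists_eq_dualVec {z : Fin 3 → ℚ} (hz : inDual19 z) : ∃ a b c, z = dualVec a b c := by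
  obtain ⟨a, ha⟩ := hz 0
  obtain ⟨b, hb⟩ := hz 1
  obtain ⟨c, hc⟩ := hz 2
  simp only [B19_mulVec, Matrix.cons_val] at ha hb hc
  refine ⟨a, b, c, funext fun i => ?_⟩
  fin_cases i <;> simp [dualVec] <;> linarith

lemma dualVec_sub (a b c a' b' c' : ℤ) :
    dualVec a b c - dualVec a' b' c' = dualVec (a - a') (b - b') (c - c') := by
  funext i
  fin_cases i <;> simp [dualVec] <;> ring

lemma isIntVec19_dualVec_iff (a b c : ℤ) :
    isIntVec19 (dualVec a b c) ↔ ((a + b : ℤ) : ZMod 5) = 0 ∧ (c : ZMod 3) = 0 := by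
  have h5 := exists_intCast_eq_div_iff (m := 5)
  have h3 := exists_intCast_eq_div_iff (m := 3)
  simp only [Nat.cast_ofNat] at h5 h3
  simp only [isIntVec19, Fin.forall_fin_succ, IsEmpty.forall_iff, and_true, dualVec,
    Matrix.cons_val_zero, Matrix.cons_val_succ, h5, h3, ZMod.intCast_zmod_eq_zero_iff_dvd]
  omega

def binForm (a b : ℤ) : ℤ := 3 * a ^ 2 - 4 * a * b + 3 * b ^ 2

lemma Q19_dualVec (a b c : ℤ) :
    Q19 (dualVec a b c) = (binForm a b : ℚ) / 5 + (c : ℚ) ^ 2 / 3 := by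
  simp [Q19, B19_mulVec, dualVec, binForm, dotProduct, Fin.sum_univ_three]
  ring

/-- The minimum of `binForm a b` over `a + b = r` in `ZMod 5`; it is attained at `binRep r`. -/
def binMin : ZMod 5 → ℤ := ![0, 3, 2, 2, 3]

def binRep : ZMod 5 → ℤ × ℤ := ![(0, 0), (1, 0), (1, 1), (-1, -1), (-1, 0)]

/-- The minimum of `c ^ 2` over `c = s` in `ZMod 3`; it is attained at `sqRep s`. -/
def sqMin : ZMod 3 → ℤ := ![0, 1, 1]

def sqRep : ZMod 3 → ℤ := ![0, 1, -1]

lemma binMin_le_binForm (a b : ℤ) : binMin ((a + b : ℤ) : ZMod 5) ≤ binForm a b := by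
  by_cases h : binForm a b ≤ 2
  · have : -1 ≤ a ∧ a ≤ 1 ∧ -1 ≤ b ∧ b ≤ 1 := by
      unfold binForm at h
      refine ⟨?_, ?_, ?_, ?_⟩ <;> nlinarith [sq_nonneg (a - b), sq_nonneg (a + b)]
    obtain ⟨ha, ha', hb, hb'⟩ := this
    interval_cases a <;> interval_cases b <;> decide
  · have : ∀ r, binMin r ≤ 3 := by decide
    linarith [this ((a + b : ℤ) : ZMod 5)]

lemma sqMin_le_sq (c : ℤ) : sqMin (c : ZMod 3) ≤ c ^ 2 := by
  rcases eq_or_ne c 0 with rfl | hc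
  · decide
  · have : ∀ s, sqMin s ≤ 1 := by decide
    linarith [this (c : ZMod 3), (one_le_sq_iff_one_le_abs c).2 (Int.one_le_abs hc)]

lemma binForm_binRep (r : ZMod 5) : binForm (binRep r).1 (binRep r).2 = binMin r := by
  fin_cases r <;> rfl

lemma intCast_binRep (r : ZMod 5) : (((binRep r).1 + (binRep r).2 : ℤ) : ZMod 5) = r := by
  revert r; decide

lemma sq_sqRep (s : ZMod 3) : sqRep s ^ 2 = sqMin s := by
  fin_cases s <;> rfl

lemma intCast_sqRep (s : ZMod 3) : (sqRep s : ZMod 3) = s := by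
  revert s; decide

def cosetMin (r : ZMod 5) (s : ZMod 3) : ℚ := (binMin r : ℚ) / 5 + (sqMin s : ℚ) / 3

def minRep (r : ZMod 5) (s : ZMod 3) : Fin 3 → ℚ :=
  dualVec (binRep r).1 (binRep r).2 (sqRep s)

lemma inDual19_minRep (r : ZMod 5) (s : ZMod 3) : inDual19 (minRep r s) :=
  inDual19_dualVec _ _ _

lemma Q19_minRep (r : ZMod 5) (s : ZMod 3) : Q19 (minRep r s) = cosetMin r s := by
  rw [minRep, Q19_dualVec, binForm_binRep, cosetMin, ← sq_sqRep]
  push_cast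
  rfl

lemma isIntVec19_dualVec_sub_iff (a b c a' b' c' : ℤ) :
    isIntVec19 (dualVec a b c - dualVec a' b' c') ↔
      ((a + b : ℤ) : ZMod 5) = ((a' + b' : ℤ) : ZMod 5) ∧ (c : ZMod 3) = c' := by
  rw [dualVec_sub, isIntVec19_dualVec_iff, show a - a' + (b - b') = a + b - (a' + b') by ring,
    Int.cast_sub, Int.cast_sub, sub_eq_zero, sub_eq_zero]

lemma isIntVec19_minRep_iff (r : ZMod 5) (s : ZMod 3) :
    isIntVec19 (minRep r s) ↔ r = 0 ∧ s = 0 := by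
  rw [minRep, isIntVec19_dualVec_iff, intCast_binRep, intCast_sqRep]

lemma exists_isIntVec19_minRep_sub {x : Fin 3 → ℚ} (hx : inDual19 x) :
    ∃ r s, isIntVec19 (minRep r s - x) := by
  obtain ⟨a, b, c, rfl⟩ := exists_eq_dualVec hx
  exact ⟨_, _, (isIntVec19_dualVec_sub_iff _ _ _ _ _ _).2 ⟨intCast_binRep _, intCast_sqRep _⟩⟩

lemma cosetMin_le_Q19_dualVec (a b c : ℤ) :
    cosetMin ((a + b : ℤ) : ZMod 5) (c : ZMod 3) ≤ Q19 (dualVec a b c) := by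
  have hab : (binMin ((a + b : ℤ) : ZMod 5) : ℚ) ≤ binForm a b := by
    exact_mod_cast binMin_le_binForm a b
  have hc : (sqMin (c : ZMod 3) : ℚ) ≤ (c : ℚ) ^ 2 := by exact_mod_cast sqMin_le_sq c
  rw [Q19_dualVec, cosetMin]
  linarith

lemma Q19_minRep_le {r : ZMod 5} {s : ZMod 3} {z : Fin 3 → ℚ} (hz : inDual19 z)
    (hzy : isIntVec19 (z - minRep r s)) : Q19 (minRep r s) ≤ Q19 z := by
  obtain ⟨a, b, c, rfl⟩ := exists_eq_dualVec hz
  obtain ⟨hr, hs⟩ := (isIntVec19_dualVec_sub_iff _ _ _ _ _ _).1 hzy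
  rw [intCast_binRep] at hr
  rw [intCast_sqRep] at hs
  rw [Q19_minRep, ← hr, ← hs]
  exact cosetMin_le_Q19_dualVec a b c

lemma cosetMin_mem {r : ZMod 5} {s : ZMod 3} (h : ¬(r = 0 ∧ s = 0)) :
    cosetMin r s ∈ ({1/3, 2/5, 3/5, 11/15, 14/15} : Set ℚ) := by
  fin_cases r <;> fin_cases s
  · exact absurd ⟨rfl, rfl⟩ h
  all_goals norm_num [cosetMin, binMin, sqMin, Matrix.cons_val]

lemma exists_cosetMin_eq {v : ℚ} (hv : v ∈ ({1/3, 2/5, 3/5, 11/15, 14/15} : Set ℚ)) :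
    ∃ r s, ¬(r = 0 ∧ s = 0) ∧ cosetMin r s = v := by
  rcases hv with rfl | rfl | rfl | rfl | rfl
  · exact ⟨0, 1, by decide, by simp only [cosetMin, binMin, sqMin, Matrix.cons_val]; norm_num⟩
  · exact ⟨2, 0, by decide, by simp only [cosetMin, binMin, sqMin, Matrix.cons_val]; norm_num⟩
  · exact ⟨1, 0, by decide, by simp only [cosetMin, binMin, sqMin, Matrix.cons_val]; norm_num⟩
  · exact ⟨2, 1, by decide, by simp only [cosetMin, binMin, sqMin, Matrix.cons_val]; norm_num⟩
  · exact ⟨1, 1, by decide, by simp only [cosetMin, binMin, sqMin, Matrix.cons_val]; norm_num⟩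

theorem stmt_19 :
    (∀ x, inDual19 x → ¬ isIntVec19 x →
      ∃ y, inDual19 y ∧ isIntVec19 (y - x) ∧
        Q19 y ∈ ({1/3, 2/5, 3/5, 11/15, 14/15} : Set ℚ) ∧
        ∀ z, inDual19 z → isIntVec19 (z - x) → Q19 y ≤ Q19 z) ∧
    (∀ v ∈ ({1/3, 2/5, 3/5, 11/15, 14/15} : Set ℚ),
      ∃ x, inDual19 x ∧ ¬ isIntVec19 x ∧ Q19 x = v ∧
        ∀ z, inDual19 z → isIntVec19 (z - x) → Q19 x ≤ Q19 z) ∧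
    (∀ x, inDual19 x → ¬ isIntVec19 x →
      ∃ y, inDual19 y ∧ isIntVec19 (y - x) ∧ Q19 y ≤ 14/15) := by
  have minimal : ∀ x, inDual19 x → ¬ isIntVec19 x →
      ∃ y, inDual19 y ∧ isIntVec19 (y - x) ∧
        Q19 y ∈ ({1/3, 2/5, 3/5, 11/15, 14/15} : Set ℚ) ∧
        ∀ z, inDual19 z → isIntVec19 (z - x) → Q19 y ≤ Q19 z := by
    intro x hx hnx
    obtain ⟨r, s, hyx⟩ := exists_isIntVec19_minRep_sub hx
    have hrs : ¬(r = 0 ∧ s = 0) := fun h =>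
      hnx (sub_sub_cancel (minRep r s) x ▸ ((isIntVec19_minRep_iff r s).2 h).sub hyx)
    refine ⟨minRep r s, inDual19_minRep r s, hyx, Q19_minRep r s ▸ cosetMin_mem hrs,
      fun z hz hzx => Q19_minRep_le hz (sub_sub_sub_cancel_right z _ x ▸ hzx.sub hyx)⟩
  refine ⟨minimal, fun v hv => ?_, fun x hx hnx => ?_⟩
  · obtain ⟨r, s, hrs, rfl⟩ := exists_cosetMin_eq hv
    exact ⟨minRep r s, inDual19_minRep r s, mt (isIntVec19_minRep_iff r s).1 hrs,
      Q19_minRep r s, fun z hz hzx => Q19_minRep_le hz hzx⟩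
  · obtain ⟨y, hy, hyx, hQ, -⟩ := minimal x hx hnx
    refine ⟨y, hy, hyx, ?_⟩
    rcases hQ with h | h | h | h | h <;> rw [h] <;> norm_num
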